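/- Let p ≥ 3 be an integer and λ > 0 a real. For each unordered pair (s,t) of distinct vertices in {1,…,p}, let θ^{st} be the parameter vector with θ^{st}_{st} = λ and all other entries zero (the Ising model on the single-edge graph H_{st}). Then for any two distinct pairs (s,t) ≠ (u,v), the symmetrized Kullback–Leibler divergence satisfies S(θ^{st}‖θ^{uv}) = 2 λ tanh(λ). -/

import Mathlib

/-!
For an Ising model the log-likelihood ratio is `energy θ - energy θ'` up to a constant, and the
constants cancel in the symmetrized divergence, so
`S(θ‖θ') = Σ_x (P_θ - P_θ')(x) (energy θ - energy θ')(x)`.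
For two single-edge models this is `λ` times a combination of the correlations `E[X_s X_t]` and
`E[X_u X_v]` under both models. The own-edge correlation is `tanh λ`, and the correlation of a
different pair vanishes because flipping a spin outside the model's edge is a symmetry of the
model that changes the sign of `X_u X_v`.
-/

open scoped Classical BigOperators
open Real

noncomputable section

/-- Sign of a Boolean spin: `true ↦ 1`, `false ↦ -1`. -/
def sgn (b : Bool) : ℝ := if b then 1 else -1

/-- Ising energy `Σ_{s<t} θ_{st} x_s x_t`. -/
def energy {p : ℕ} (θ : Fin p → Fin p → ℝ) (x : Fin p → Bool) : ℝ :=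
  ∑ s : Fin p, ∑ t : Fin p, if s < t then θ s t * sgn (x s) * sgn (x t) else 0

/-- Partition function `Z(θ)`. -/
def Zpart {p : ℕ} (θ : Fin p → Fin p → ℝ) : ℝ :=
  ∑ x : Fin p → Bool, Real.exp (energy θ x)

/-- Ising probability mass function `P_θ`. -/
def isingP {p : ℕ} (θ : Fin p → Fin p → ℝ) (x : Fin p → Bool) : ℝ :=
  Real.exp (energy θ x) / Zpart θ

/-- Probability of an event under `n` i.i.d. samples from `P_θ`. -/
def probn {p : ℕ} (n : ℕ) (θ : Fin p → Fin p → ℝ)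
    (A : (Fin n → Fin p → Bool) → Prop) : ℝ :=
  ∑ xs : Fin n → Fin p → Bool, if A xs then ∏ i, isingP θ (xs i) else 0

/-- Probability of a single-sample event under `P_θ`. -/
def prob1 {p : ℕ} (θ : Fin p → Fin p → ℝ) (A : (Fin p → Bool) → Prop) : ℝ :=
  ∑ x : Fin p → Bool, if A x then isingP θ x else 0

/-- A parameter vector: symmetric array vanishing on the diagonal. -/
def IsSymParam {p : ℕ} (θ : Fin p → Fin p → ℝ) : Prop :=
  (∀ s t, θ s t = θ t s) ∧ (∀ s, θ s s = 0)

/-- The class `Θ_{λ,ω}(G)` of admissible parameter vectors for graph `G`. -/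
def ParamClass {p : ℕ} (G : SimpleGraph (Fin p)) (lam om : ℝ)
    (θ : Fin p → Fin p → ℝ) : Prop :=
  IsSymParam θ ∧ (∀ s t : Fin p, ¬ G.Adj s t → θ s t = 0) ∧
    (∀ s t : Fin p, G.Adj s t → lam ≤ |θ s t|) ∧
    (∀ s : Fin p, (∑ t : Fin p, |θ s t|) ≤ om)

/-- The class `G_{p,d}` of graphs with maximum degree at most `d`. -/
def degClass (p d : ℕ) : Set (SimpleGraph (Fin p)) :=
  {G | ∀ v : Fin p, ({u | G.Adj v u}).ncard ≤ d}

/-- The class `G_{p,k}` of graphs with at most `k` edges. -/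
def edgeClass (p k : ℕ) : Set (SimpleGraph (Fin p)) :=
  {G | G.edgeSet.ncard ≤ k}

/-- Kullback–Leibler divergence `D(θ‖θ')` between Ising models. -/
def KLdiv {p : ℕ} (θ θ' : Fin p → Fin p → ℝ) : ℝ :=
  ∑ x : Fin p → Bool, isingP θ x * Real.log (isingP θ x / isingP θ' x)

/-- Symmetrized KL divergence `S(θ‖θ')`. -/
def symKL {p : ℕ} (θ θ' : Fin p → Fin p → ℝ) : ℝ := KLdiv θ θ' + KLdiv θ' θ

/-- The divergence `J(θ‖θ') = D((θ+θ')/2‖θ) + D((θ+θ')/2‖θ')`. -/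
def Jdiv {p : ℕ} (θ θ' : Fin p → Fin p → ℝ) : ℝ :=
  KLdiv (fun s t => (θ s t + θ' s t) / 2) θ +
    KLdiv (fun s t => (θ s t + θ' s t) / 2) θ'

/-- Mean parameter `μ_{st}(θ) = E_θ[X_s X_t]`. -/
def meanPar {p : ℕ} (θ : Fin p → Fin p → ℝ) (s t : Fin p) : ℝ :=
  ∑ x : Fin p → Bool, isingP θ x * (sgn (x s) * sgn (x t))

section Ising

variable {p : ℕ}

lemma sgn_not (b : Bool) : sgn (!b) = -sgn b := by
  cases b <;> simp [sgn]

lemma Zpart_pos (θ : Fin p → Fin p → ℝ) : 0 < Zpart θ :=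
  Finset.sum_pos (fun _ _ => Real.exp_pos _) Finset.univ_nonempty

lemma sum_isingP (θ : Fin p → Fin p → ℝ) : ∑ x, isingP θ x = 1 := by
  simp only [isingP, ← Finset.sum_div]
  exact div_self (Zpart_pos θ).ne'

lemma log_isingP_div (θ θ' : Fin p → Fin p → ℝ) (x : Fin p → Bool) :
    Real.log (isingP θ x / isingP θ' x)
      = energy θ x - energy θ' x - (Real.log (Zpart θ) - Real.log (Zpart θ')) := by
  have hZ := (Zpart_pos θ).ne'
  have hZ' := (Zpart_pos θ').ne'
  rw [isingP, isingP, Real.log_div (by positivity) (by positivity),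
    Real.log_div (Real.exp_pos _).ne' hZ, Real.log_div (Real.exp_pos _).ne' hZ',
    Real.log_exp, Real.log_exp]
  ring

lemma KLdiv_eq (θ θ' : Fin p → Fin p → ℝ) :
    KLdiv θ θ' = ∑ x, isingP θ x * (energy θ x - energy θ' x)
      - (Real.log (Zpart θ) - Real.log (Zpart θ')) := by
  simp only [KLdiv, log_isingP_div, mul_sub, Finset.sum_sub_distrib, ← Finset.sum_mul,
    sum_isingP, one_mul]

theorem symKL_eq_sum (θ θ' : Fin p → Fin p → ℝ) :
    symKL θ θ' = ∑ x, (isingP θ x - isingP θ' x) * (energy θ x - energy θ' x) := by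
  have hswap : ∑ x, isingP θ' x * (energy θ' x - energy θ x)
      = -∑ x, isingP θ' x * (energy θ x - energy θ' x) := by
    simp only [← Finset.sum_neg_distrib, ← mul_neg, neg_sub]
  rw [symKL, KLdiv_eq, KLdiv_eq, hswap]
  simp only [sub_mul, Finset.sum_sub_distrib]
  ring

def flipSpin (w : Fin p) (x : Fin p → Bool) : Fin p → Bool :=
  Function.update x w (!x w)

lemma flipSpin_involutive (w : Fin p) : Function.Involutive (flipSpin w) := by
  intro x
  ext i
  by_cases h : i = w
  · subst h; simp [flipSpin]
  · simp [flipSpin, h]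

lemma flipSpin_apply_self (w : Fin p) (x : Fin p → Bool) : flipSpin w x w = !x w :=
  Function.update_self _ _ _

lemma flipSpin_apply_of_ne {w i : Fin p} (h : i ≠ w) (x : Fin p → Bool) :
    flipSpin w x i = x i :=
  Function.update_of_ne h _ _

lemma sum_comp_flipSpin (w : Fin p) (f : (Fin p → Bool) → ℝ) :
    ∑ x, f (flipSpin w x) = ∑ x, f x :=
  (flipSpin_involutive w).bijective.sum_comp f

lemma sum_mul_sgn_eq_zero (w : Fin p) (f : (Fin p → Bool) → ℝ)
    (hf : ∀ x, f (flipSpin w x) = f x) : ∑ x, f x * sgn (x w) = 0 := by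
  have hneg : ∑ x, f x * sgn (x w) = -∑ x, f x * sgn (x w) := by
    conv_lhs => rw [← sum_comp_flipSpin w]
    simp only [hf, flipSpin_apply_self, sgn_not, mul_neg, Finset.sum_neg_distrib]
  linarith

lemma two_mul_sum_comp_sgn_mul_sgn {s t : Fin p} (hst : s ≠ t) (g : ℝ → ℝ) :
    2 * ∑ x : Fin p → Bool, g (sgn (x s) * sgn (x t)) = 2 ^ p * (g 1 + g (-1)) := by
  have hpair : ∀ x : Fin p → Bool,
      g (sgn (x s) * sgn (x t)) + g (sgn (x s) * sgn (flipSpin t x t)) = g 1 + g (-1) := by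
    intro x
    rw [flipSpin_apply_self, sgn_not]
    cases x s <;> cases x t <;> simp [sgn, add_comm]
  calc 2 * ∑ x : Fin p → Bool, g (sgn (x s) * sgn (x t))
      = ∑ x, (g (sgn (x s) * sgn (x t)) + g (sgn (flipSpin t x s) * sgn (flipSpin t x t))) := by
        rw [Finset.sum_add_distrib, sum_comp_flipSpin t (fun x => g (sgn (x s) * sgn (x t)))]
        ring
    _ = 2 ^ p * (g 1 + g (-1)) := by
        simp only [flipSpin_apply_of_ne hst, hpair, Finset.sum_const, Finset.card_univ,
          Fintype.card_fun, Fintype.card_bool, Fintype.card_fin, nsmul_eq_mul]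
        push_cast
        ring

def singleEdgeParam (lam : ℝ) (s t : Fin p) : Fin p → Fin p → ℝ :=
  fun a b => if (a = s ∧ b = t) ∨ (a = t ∧ b = s) then lam else 0

lemma singleEdgeParam_comm (lam : ℝ) (s t : Fin p) :
    singleEdgeParam lam s t = singleEdgeParam lam t s := by
  ext a b
  simp only [singleEdgeParam, or_comm]

lemma energy_singleEdgeParam_of_lt (lam : ℝ) {s t : Fin p} (hst : s < t) (x : Fin p → Bool) :
    energy (singleEdgeParam lam s t) x = lam * (sgn (x s) * sgn (x t)) := by
  rw [energy, Fintype.sum_eq_single s, Fintype.sum_eq_single t]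
  · simp [singleEdgeParam, hst, mul_assoc]
  · intro b hb
    simp [singleEdgeParam, hb, hst.ne]
  · intro a ha
    refine Fintype.sum_eq_zero _ fun b => ?_
    simp only [singleEdgeParam, ha, false_and, false_or]
    split_ifs with hab hedge
    · obtain ⟨rfl, rfl⟩ := hedge
      exact absurd hab hst.not_gt
    · ring
    · rfl

lemma energy_singleEdgeParam (lam : ℝ) {s t : Fin p} (hst : s ≠ t) (x : Fin p → Bool) :
    energy (singleEdgeParam lam s t) x = lam * (sgn (x s) * sgn (x t)) := by
  rcases hst.lt_or_gt with hlt | hgt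
  · exact energy_singleEdgeParam_of_lt lam hlt x
  · rw [singleEdgeParam_comm, energy_singleEdgeParam_of_lt lam hgt, mul_comm (sgn _)]

lemma Zpart_singleEdgeParam (lam : ℝ) {s t : Fin p} (hst : s ≠ t) :
    Zpart (singleEdgeParam lam s t) = 2 ^ p * Real.cosh lam := by
  have h := two_mul_sum_comp_sgn_mul_sgn hst fun y => Real.exp (lam * y)
  simp only [mul_one, mul_neg] at h
  rw [Zpart]
  simp only [energy_singleEdgeParam lam hst, Real.cosh_eq]
  linarith

lemma meanPar_singleEdgeParam_self (lam : ℝ) {s t : Fin p} (hst : s ≠ t) :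
    meanPar (singleEdgeParam lam s t) s t = Real.tanh lam := by
  have h := two_mul_sum_comp_sgn_mul_sgn hst fun y => Real.exp (lam * y) * y
  simp only [mul_one, mul_neg] at h
  have hsinh : ∑ x : Fin p → Bool, Real.exp (lam * (sgn (x s) * sgn (x t))) * (sgn (x s) * sgn (x t))
      = 2 ^ p * Real.sinh lam := by
    rw [Real.sinh_eq]; linarith
  simp only [meanPar, isingP, div_mul_eq_mul_div, ← Finset.sum_div, energy_singleEdgeParam lam hst,
    hsinh, Zpart_singleEdgeParam lam hst, Real.tanh_eq_sinh_div_cosh]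
  field_simp

lemma meanPar_comm (θ : Fin p → Fin p → ℝ) (u v : Fin p) : meanPar θ u v = meanPar θ v u :=
  Finset.sum_congr rfl fun x _ => by rw [mul_comm (sgn (x u))]

lemma isingP_singleEdgeParam_flipSpin (lam : ℝ) {s t w : Fin p} (hst : s ≠ t) (hws : w ≠ s)
    (hwt : w ≠ t) (x : Fin p → Bool) :
    isingP (singleEdgeParam lam s t) (flipSpin w x) = isingP (singleEdgeParam lam s t) x := by
  simp only [isingP, energy_singleEdgeParam lam hst, flipSpin_apply_of_ne hws.symm,
    flipSpin_apply_of_ne hwt.symm]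

lemma meanPar_singleEdgeParam_of_ne (lam : ℝ) {s t u v : Fin p} (hst : s ≠ t) (hus : u ≠ s)
    (hut : u ≠ t) (huv : u ≠ v) : meanPar (singleEdgeParam lam s t) u v = 0 := by
  have hrearrange : meanPar (singleEdgeParam lam s t) u v
      = ∑ x, isingP (singleEdgeParam lam s t) x * sgn (x v) * sgn (x u) :=
    Finset.sum_congr rfl fun x _ => by ring
  refine hrearrange.trans (sum_mul_sgn_eq_zero u _ fun x => ?_)
  rw [isingP_singleEdgeParam_flipSpin lam hst hus hut, flipSpin_apply_of_ne huv.symm]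

lemma meanPar_singleEdgeParam_eq_zero (lam : ℝ) {s t u v : Fin p} (hst : s ≠ t) (huv : u ≠ v)
    (hne : ¬((s = u ∧ t = v) ∨ (s = v ∧ t = u))) : meanPar (singleEdgeParam lam s t) u v = 0 := by
  by_cases hu : u ≠ s ∧ u ≠ t
  · exact meanPar_singleEdgeParam_of_ne lam hst hu.1 hu.2 huv
  · rw [meanPar_comm]
    exact meanPar_singleEdgeParam_of_ne lam hst (by grind) (by grind) huv.symm

theorem symKL_singleEdgeParam (lam : ℝ) {s t u v : Fin p} (hst : s ≠ t) (huv : u ≠ v) :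
    symKL (singleEdgeParam lam s t) (singleEdgeParam lam u v)
      = lam * (meanPar (singleEdgeParam lam s t) s t - meanPar (singleEdgeParam lam u v) s t
        - (meanPar (singleEdgeParam lam s t) u v - meanPar (singleEdgeParam lam u v) u v)) := by
  simp only [symKL_eq_sum, energy_singleEdgeParam lam hst, energy_singleEdgeParam lam huv, meanPar,
    ← Finset.sum_sub_distrib, Finset.mul_sum]
  exact Finset.sum_congr rfl fun x _ => by ring

end Ising

theorem symKL_single_edge_general (p : ℕ) (lam : ℝ)
    (s t u v : Fin p) (hst : s ≠ t) (huv : u ≠ v)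
    (hdiff : ¬((s = u ∧ t = v) ∨ (s = v ∧ t = u)))
    (θst θuv : Fin p → Fin p → ℝ)
    (hθst : θst = fun a b =>
      if (a = s ∧ b = t) ∨ (a = t ∧ b = s) then lam else 0)
    (hθuv : θuv = fun a b =>
      if (a = u ∧ b = v) ∨ (a = v ∧ b = u) then lam else 0) :
    symKL θst θuv = 2 * lam * Real.tanh lam := by
  have hdiff' : ¬((u = s ∧ v = t) ∨ (u = t ∧ v = s)) := by grind
  change θst = singleEdgeParam lam s t at hθst
  change θuv = singleEdgeParam lam u v at hθuv
  rw [hθst, hθuv, symKL_singleEdgeParam lam hst huv, meanPar_singleEdgeParam_self lam hst,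
    meanPar_singleEdgeParam_self lam huv, meanPar_singleEdgeParam_eq_zero lam hst huv hdiff,
    meanPar_singleEdgeParam_eq_zero lam huv hst hdiff']
  ring

/-- Ensemble A computation: for single-edge Ising models with weight `λ` on
distinct edges `(s,t) ≠ (u,v)`, the symmetrized KL divergence equals
`2λ tanh(λ)`. -/
theorem symKL_single_edge (p : ℕ) (lam : ℝ) (hp : 3 ≤ p) (hlam : 0 < lam)
    (s t u v : Fin p) (hst : s ≠ t) (huv : u ≠ v)
    (hdiff : ¬((s = u ∧ t = v) ∨ (s = v ∧ t = u)))
    (θst θuv : Fin p → Fin p → ℝ)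
    (hθst : θst = fun a b =>
      if (a = s ∧ b = t) ∨ (a = t ∧ b = s) then lam else 0)
    (hθuv : θuv = fun a b =>
      if (a = u ∧ b = v) ∨ (a = v ∧ b = u) then lam else 0) :
    symKL θst θuv = 2 * lam * Real.tanh lam :=
  symKL_single_edge_general p lam s t u v hst huv hdiff θst θuv hθst hθuv
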